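/- Fix real numbers p ≥ 1, c ≥ 1 and M > 0. For η > 0 and ν ∈ ℝ define the series S_{p,c}(η,ν) = Σ_{n=1}^∞ e^{p(ηn−ν)} / ((1 + e^{ηn−ν})^p (1 + e^{η(n−1)−ν})^p) · (ηn)^{c−1} η. Then there exist constants 0 < c₀ ≤ C₀ depending only on p, c and M such that for all 0 < η ≤ M and all ν ∈ ℝ: if ν ≥ 0 then c₀(1 + ν^{c−1} + η^{c−1}) ≤ S_{p,c}(η,ν) ≤ C₀(1 + ν^{c−1} + η^{c−1}), and if ν < 0 then c₀ e^{pν} ≤ S_{p,c}(η,ν) ≤ C₀ e^{pν}. -/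

import Mathlib

open Real Finset

noncomputable def Sterm (p c η ν : ℝ) (n : ℕ) : ℝ :=
  Real.exp (p * (η * ((n : ℝ) + 1) - ν)) /
      ((1 + Real.exp (η * ((n : ℝ) + 1) - ν)) ^ p *
        (1 + Real.exp (η * (n : ℝ) - ν)) ^ p) *
    (η * ((n : ℝ) + 1)) ^ (c - 1) * η

lemma exp_max_le (y : ℝ) : Real.exp (max y 0) ≤ 1 + Real.exp y := by
  rcases le_total y 0 with h | h
  · rw [max_eq_right h]; simp [Real.exp_nonneg, (Real.exp_pos y).le]
  · rw [max_eq_left h]; nlinarith [Real.exp_pos y]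

lemma one_add_exp_le (y : ℝ) : 1 + Real.exp y ≤ 2 * Real.exp (max y 0) := by
  have h1 : (1:ℝ) ≤ Real.exp (max y 0) := by
    rw [← Real.exp_zero]; exact Real.exp_le_exp.2 (le_max_right _ _)
  have h2 : Real.exp y ≤ Real.exp (max y 0) := Real.exp_le_exp.2 (le_max_left _ _)
  linarith

/-- Core sandwich for the exponential factor. -/
lemma core_sandwich (p η x : ℝ) (hp : 0 ≤ p) :
    (2:ℝ) ^ (-(2*p)) * Real.exp (p * (x - max x 0 - max (x - η) 0)) ≤
      Real.exp (p*x) / ((1 + Real.exp x) ^ p * (1 + Real.exp (x - η)) ^ p) ∧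
    Real.exp (p*x) / ((1 + Real.exp x) ^ p * (1 + Real.exp (x - η)) ^ p) ≤
      Real.exp (p * (x - max x 0 - max (x - η) 0)) := by
  have key : ∀ y : ℝ, Real.exp (p * max y 0) ≤ (1 + Real.exp y) ^ p ∧
      (1 + Real.exp y) ^ p ≤ (2:ℝ)^p * Real.exp (p * max y 0) := by
    intro y
    constructor
    · calc Real.exp (p * max y 0) = Real.exp (max y 0) ^ p := by
            rw [mul_comm, Real.exp_mul]
        _ ≤ (1 + Real.exp y) ^ p :=
            Real.rpow_le_rpow (Real.exp_nonneg _) (exp_max_le y) hp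
    · calc (1 + Real.exp y) ^ p ≤ (2 * Real.exp (max y 0)) ^ p :=
            Real.rpow_le_rpow (by positivity) (one_add_exp_le y) hp
        _ = (2:ℝ)^p * Real.exp (p * max y 0) := by
            rw [Real.mul_rpow (by norm_num) (Real.exp_nonneg _), mul_comm p, Real.exp_mul]
  set D := Real.exp (p * max x 0) * Real.exp (p * max (x - η) 0) with hDdef
  have hD : 0 < D := by positivity
  have hAB1 : D ≤ (1 + Real.exp x) ^ p * (1 + Real.exp (x - η)) ^ p :=
    mul_le_mul (key x).1 (key (x-η)).1 (Real.exp_nonneg _) (by positivity)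
  have hAB2 : (1 + Real.exp x) ^ p * (1 + Real.exp (x - η)) ^ p ≤ (2:ℝ)^(2*p) * D := by
    have := mul_le_mul (key x).2 (key (x-η)).2 (by positivity)
      (by positivity : (0:ℝ) ≤ (2:ℝ)^p * Real.exp (p * max x 0))
    calc (1 + Real.exp x) ^ p * (1 + Real.exp (x - η)) ^ p
        ≤ ((2:ℝ)^p * Real.exp (p * max x 0)) * ((2:ℝ)^p * Real.exp (p * max (x-η) 0)) := this
      _ = (2:ℝ)^(2*p) * D := by
          have h22 : (2:ℝ)^p * (2:ℝ)^p = (2:ℝ)^(2*p) := by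
            rw [← Real.rpow_add (by norm_num : (0:ℝ) < 2)]; ring_nf
          rw [hDdef, ← h22]; ring
  have hexpG : Real.exp (p * (x - max x 0 - max (x - η) 0)) = Real.exp (p*x) / D := by
    rw [hDdef, ← Real.exp_add, eq_div_iff (by positivity), ← Real.exp_add]
    ring_nf
  have hABpos : (0:ℝ) < (1 + Real.exp x) ^ p * (1 + Real.exp (x - η)) ^ p := by positivity
  constructor
  · have h2 : Real.exp (p*x) / ((2:ℝ)^(2*p) * D) ≤
        Real.exp (p*x) / ((1 + Real.exp x) ^ p * (1 + Real.exp (x - η)) ^ p) :=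
      div_le_div_of_nonneg_left (Real.exp_nonneg _) hABpos hAB2
    calc (2:ℝ) ^ (-(2*p)) * Real.exp (p * (x - max x 0 - max (x - η) 0))
        = Real.exp (p*x) / ((2:ℝ)^(2*p) * D) := by
          rw [hexpG, Real.rpow_neg (by norm_num : (0:ℝ) ≤ 2)]
          field_simp
      _ ≤ _ := h2
  · rw [hexpG]
    exact div_le_div_of_nonneg_left (Real.exp_nonneg _) hD hAB1

noncomputable def Gv (η x : ℝ) : ℝ := x - max x 0 - max (x - η) 0

lemma Gv_facts (η x : ℝ) : Gv η x ≤ 0 ∧ Gv η x ≤ x ∧ Gv η x ≤ η - x := by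
  unfold Gv
  refine ⟨?_, ?_, ?_⟩ <;>
    [skip; skip; skip] <;>
    linarith [le_max_left x 0, le_max_right x 0, le_max_left (x-η) 0, le_max_right (x-η) 0]

lemma Gv_eq (η x : ℝ) (hη : 0 ≤ η) (hx : η ≤ x) : Gv η x = η - x := by
  unfold Gv
  rw [max_eq_left (hη.trans hx), max_eq_left (by linarith)]
  ring

lemma Gv_ge (η x : ℝ) (hη : 0 ≤ η) (hx : 0 ≤ x) : -x ≤ Gv η x := by
  unfold Gv
  have h1 : max (x - η) 0 ≤ max x 0 := max_le_max (by linarith) le_rfl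
  have h2 : max x 0 = x := max_eq_left hx
  linarith

lemma Sterm_le_G (p c η ν : ℝ) (hp : 0 ≤ p) (hc : 1 ≤ c) (hη : 0 < η) (n : ℕ) :
    Sterm p c η ν n ≤
      Real.exp (p * Gv η (η*((n:ℝ)+1)-ν)) * (η*((n:ℝ)+1))^(c-1) * η := by
  unfold Sterm
  have hx : η*(n:ℝ) - ν = (η*((n:ℝ)+1) - ν) - η := by ring
  rw [hx]
  have h := (core_sandwich p η (η*((n:ℝ)+1)-ν) hp).2
  have ht : (0:ℝ) ≤ (η*((n:ℝ)+1))^(c-1) := by positivity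
  unfold Gv
  exact mul_le_mul_of_nonneg_right (mul_le_mul_of_nonneg_right h ht) hη.le

lemma Sterm_ge_G (p c η ν : ℝ) (hp : 0 ≤ p) (hc : 1 ≤ c) (hη : 0 < η) (n : ℕ) :
    (2:ℝ)^(-(2*p)) * Real.exp (p * Gv η (η*((n:ℝ)+1)-ν)) * (η*((n:ℝ)+1))^(c-1) * η ≤
      Sterm p c η ν n := by
  unfold Sterm
  have hx : η*(n:ℝ) - ν = (η*((n:ℝ)+1) - ν) - η := by ring
  rw [hx]
  have h := (core_sandwich p η (η*((n:ℝ)+1)-ν) hp).1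
  have ht : (0:ℝ) ≤ (η*((n:ℝ)+1))^(c-1) := by positivity
  unfold Gv
  exact mul_le_mul_of_nonneg_right (mul_le_mul_of_nonneg_right h ht) hη.le

lemma Sterm_nonneg (p c η ν : ℝ) (hη : 0 < η) (n : ℕ) : 0 ≤ Sterm p c η ν n := by
  unfold Sterm
  have h1 : (0:ℝ) < (1 + Real.exp (η * ((n:ℝ) + 1) - ν)) ^ p := by positivity
  have h2 : (0:ℝ) < (1 + Real.exp (η * (n:ℝ) - ν)) ^ p := by positivity
  have ht : (0:ℝ) ≤ (η*((n:ℝ)+1))^(c-1) := by positivity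
  positivity

lemma poly_le (c : ℝ) (hc : 1 ≤ c) :
    ∃ K : ℝ, 1 ≤ K ∧ ∀ t : ℝ, 0 ≤ t → t ^ (c-1) ≤ K * Real.exp (t/2) := by
  set m : ℕ := ⌈c - 1⌉₊ with hm
  refine ⟨(2:ℝ)^(c-1) * (1 + (m.factorial : ℝ)), ?_, ?_⟩
  · have h1 : (1:ℝ) ≤ (2:ℝ)^(c-1) := Real.one_le_rpow (by norm_num) (by linarith)
    have h2 : (1:ℝ) ≤ 1 + (m.factorial : ℝ) := by
      have := m.factorial_pos
      have : (1:ℝ) ≤ (m.factorial : ℝ) := by exact_mod_cast this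
      linarith
    nlinarith
  · intro t ht
    have hs : (0:ℝ) ≤ t/2 := by linarith
    have key : (t/2) ^ (c-1) ≤ (1 + (m.factorial : ℝ)) * Real.exp (t/2) := by
      have h1 : (t/2) ^ (c-1) ≤ 1 + (t/2) ^ m := by
        rcases le_total (t/2) 1 with h | h
        · have := Real.rpow_le_one hs h (by linarith : (0:ℝ) ≤ c - 1)
          have : (0:ℝ) ≤ (t/2)^m := by positivity
          linarith [Real.rpow_le_one hs ‹t/2 ≤ 1› (by linarith : (0:ℝ) ≤ c - 1)]
        · have h2 : (t/2) ^ (c-1) ≤ (t/2) ^ (m:ℝ) :=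
            Real.rpow_le_rpow_of_exponent_le h (Nat.le_ceil _)
          rw [Real.rpow_natCast] at h2
          linarith
      have h2 : (t/2) ^ m ≤ (m.factorial : ℝ) * Real.exp (t/2) := by
        have := Real.pow_div_factorial_le_exp (x := t/2) hs m
        have hf : (0:ℝ) < (m.factorial : ℝ) := by exact_mod_cast m.factorial_pos
        rw [div_le_iff₀ hf] at this
        linarith [this]
      have h3 : (1:ℝ) ≤ Real.exp (t/2) := Real.one_le_exp hs
      nlinarith
    have ht2 : t ^ (c-1) = (2:ℝ)^(c-1) * (t/2)^(c-1) := by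
      rw [← Real.mul_rpow (by norm_num) hs]
      ring_nf
    rw [ht2, mul_assoc]
    have h2pos : (0:ℝ) ≤ (2:ℝ)^(c-1) := by positivity
    exact mul_le_mul_of_nonneg_left key h2pos

lemma geom_eta (η Mv : ℝ) (hη : 0 < η) (hηM : η ≤ Mv) :
    η * ∑' k : ℕ, (Real.exp (-(η/2)))^k ≤ 2 * Real.exp (Mv/2) := by
  have hr0 : (0:ℝ) ≤ Real.exp (-(η/2)) := Real.exp_nonneg _
  have hr1 : Real.exp (-(η/2)) < 1 := by
    rw [Real.exp_lt_one_iff]; linarith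
  rw [tsum_geometric_of_lt_one hr0 hr1]
  have key : η/2 ≤ Real.exp (Mv/2) * (1 - Real.exp (-(η/2))) := by
    have h1 : η/2 * Real.exp (-(η/2)) ≤ 1 - Real.exp (-(η/2)) := by
      have hid : Real.exp (η/2) * Real.exp (-(η/2)) = 1 := by
        rw [← Real.exp_add]; simp
      have h := mul_le_mul_of_nonneg_right (Real.add_one_le_exp (η/2))
        (Real.exp_nonneg (-(η/2)))
      nlinarith
    have h2 : Real.exp (η/2) ≤ Real.exp (Mv/2) := Real.exp_le_exp.2 (by linarith)
    have h3 : η/2 = (η/2 * Real.exp (-(η/2))) * Real.exp (η/2) := by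
      rw [mul_assoc, ← Real.exp_add]; simp
    have h4 : (0:ℝ) < Real.exp (η/2) := Real.exp_pos _
    nlinarith [Real.exp_pos (η/2), mul_le_mul_of_nonneg_right h1 h4.le,
      mul_le_mul_of_nonneg_left h2 (by nlinarith [Real.exp_pos (-(η/2))] : (0:ℝ) ≤ 1 - Real.exp (-(η/2)))]
  have hpos : (0:ℝ) < 1 - Real.exp (-(η/2)) := by nlinarith
  rw [← div_eq_mul_inv, div_le_iff₀ hpos]
  nlinarith

lemma pG_le_G (p G : ℝ) (hp : 1 ≤ p) (hG : G ≤ 0) : p * G ≤ G := by nlinarith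

/-- Upper bound (B): `Sterm n ≤ exp (η - x) * t^(c-1) * η`. -/
lemma Sterm_le_B (p c η ν : ℝ) (hp : 1 ≤ p) (hc : 1 ≤ c) (hη : 0 < η) (n : ℕ) :
    Sterm p c η ν n ≤
      Real.exp (η - (η*((n:ℝ)+1) - ν)) * (η*((n:ℝ)+1))^(c-1) * η := by
  refine (Sterm_le_G p c η ν (by linarith) hc hη n).trans ?_
  have hf := Gv_facts η (η*((n:ℝ)+1)-ν)
  have h : p * Gv η (η*((n:ℝ)+1)-ν) ≤ η - (η*((n:ℝ)+1) - ν) :=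
    (pG_le_G p _ hp hf.1).trans hf.2.2
  have := Real.exp_le_exp.2 h
  have ht : (0:ℝ) ≤ (η*((n:ℝ)+1))^(c-1) := by positivity
  exact mul_le_mul_of_nonneg_right (mul_le_mul_of_nonneg_right this ht) hη.le

/-- Upper bound (A): `Sterm n ≤ exp x * t^(c-1) * η`. -/
lemma Sterm_le_A (p c η ν : ℝ) (hp : 1 ≤ p) (hc : 1 ≤ c) (hη : 0 < η) (n : ℕ) :
    Sterm p c η ν n ≤
      Real.exp (η*((n:ℝ)+1) - ν) * (η*((n:ℝ)+1))^(c-1) * η := by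
  refine (Sterm_le_G p c η ν (by linarith) hc hη n).trans ?_
  have hf := Gv_facts η (η*((n:ℝ)+1)-ν)
  have h : p * Gv η (η*((n:ℝ)+1)-ν) ≤ η*((n:ℝ)+1) - ν :=
    (pG_le_G p _ hp hf.1).trans hf.2.1
  have := Real.exp_le_exp.2 h
  have ht : (0:ℝ) ≤ (η*((n:ℝ)+1))^(c-1) := by positivity
  exact mul_le_mul_of_nonneg_right (mul_le_mul_of_nonneg_right this ht) hη.le

/-- Upper bound (C): `Sterm n ≤ exp (p*(η - x)) * t^(c-1) * η`. -/
lemma Sterm_le_C (p c η ν : ℝ) (hp : 1 ≤ p) (hc : 1 ≤ c) (hη : 0 < η) (n : ℕ) :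
    Sterm p c η ν n ≤
      Real.exp (p * (η - (η*((n:ℝ)+1) - ν))) * (η*((n:ℝ)+1))^(c-1) * η := by
  refine (Sterm_le_G p c η ν (by linarith) hc hη n).trans ?_
  have hf := Gv_facts η (η*((n:ℝ)+1)-ν)
  have h : p * Gv η (η*((n:ℝ)+1)-ν) ≤ p * (η - (η*((n:ℝ)+1) - ν)) :=
    mul_le_mul_of_nonneg_left hf.2.2 (by linarith)
  have := Real.exp_le_exp.2 h
  have ht : (0:ℝ) ≤ (η*((n:ℝ)+1))^(c-1) := by positivity
  exact mul_le_mul_of_nonneg_right (mul_le_mul_of_nonneg_right this ht) hη.le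

/-- Geometric-tail comparison helper. -/
lemma tsum_le_geom {f : ℕ → ℝ} {C r : ℝ} (hf : ∀ n, 0 ≤ f n) (hC : 0 ≤ C)
    (hr0 : 0 ≤ r) (hr1 : r < 1) (h : ∀ n, f n ≤ C * r ^ (n+1)) :
    Summable f ∧ (∑' n, f n) ≤ C * ∑' k : ℕ, r ^ k := by
  have hgeo : Summable (fun k : ℕ => r ^ k) := summable_geometric_of_lt_one hr0 hr1
  have hg : Summable (fun n : ℕ => C * r ^ (n+1)) := by
    refine ((hgeo.mul_left (C * r)).congr fun n => ?_)
    ring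
  have hsum : Summable f := Summable.of_nonneg_of_le hf h hg
  refine ⟨hsum, (Summable.tsum_le_tsum h hsum hg).trans ?_⟩
  have h2 : ∀ n : ℕ, C * r ^ (n+1) ≤ C * r ^ n := by
    intro n
    have : r ^ (n+1) ≤ r ^ n := by
      calc r ^ (n+1) = r ^ n * r := by ring
        _ ≤ r ^ n * 1 := by
            exact mul_le_mul_of_nonneg_left hr1.le (by positivity)
        _ = r ^ n := by ring
    exact mul_le_mul_of_nonneg_left this hC
  calc (∑' n, C * r ^ (n+1)) ≤ ∑' n, C * r ^ n :=
        Summable.tsum_le_tsum h2 hg (hgeo.mul_left C)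
    _ = C * ∑' k : ℕ, r ^ k := tsum_mul_left

/-- The geometric majorant for `Sterm`. -/
lemma Sterm_major (p c η ν K : ℝ) (hp : 1 ≤ p) (hc : 1 ≤ c) (hη : 0 < η) (hK0 : 0 ≤ K)
    (hK : ∀ t : ℝ, 0 ≤ t → t ^ (c-1) ≤ K * Real.exp (t/2)) (n : ℕ) :
    Sterm p c η ν n ≤ (Real.exp (η + ν) * K * η) * (Real.exp (-(η/2))) ^ (n+1) := by
  refine (Sterm_le_B p c η ν hp hc hη n).trans ?_
  have ht : (0:ℝ) ≤ η*((n:ℝ)+1) := by positivity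
  have h1 : (η*((n:ℝ)+1))^(c-1) ≤ K * Real.exp (η*((n:ℝ)+1)/2) := hK _ ht
  have hrn : (Real.exp (-(η/2))) ^ (n+1) = Real.exp (-(η*((n:ℝ)+1))/2) := by
    rw [← Real.exp_nat_mul]
    congr 1
    push_cast
    ring
  have key : Real.exp (η - (η*((n:ℝ)+1) - ν)) * Real.exp (η*((n:ℝ)+1)/2) =
      Real.exp (η + ν) * Real.exp (-(η*((n:ℝ)+1))/2) := by
    rw [← Real.exp_add, ← Real.exp_add]; congr 1; ring
  calc Real.exp (η - (η*((n:ℝ)+1) - ν)) * (η*((n:ℝ)+1))^(c-1) * η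
      ≤ Real.exp (η - (η*((n:ℝ)+1) - ν)) * (K * Real.exp (η*((n:ℝ)+1)/2)) * η :=
        mul_le_mul_of_nonneg_right
          (mul_le_mul_of_nonneg_left h1 (Real.exp_nonneg _)) hη.le
    _ = K * η * (Real.exp (η - (η*((n:ℝ)+1) - ν)) * Real.exp (η*((n:ℝ)+1)/2)) := by
        ring
    _ = K * η * (Real.exp (η + ν) * Real.exp (-(η*((n:ℝ)+1))/2)) := by rw [key]
    _ = (Real.exp (η + ν) * K * η) * (Real.exp (-(η/2))) ^ (n+1) := by
        rw [hrn]; ring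

lemma Sterm_summable (p c η ν : ℝ) (hp : 1 ≤ p) (hc : 1 ≤ c) (hη : 0 < η) :
    Summable (Sterm p c η ν) := by
  obtain ⟨K, hK1, hK⟩ := poly_le c hc
  have hr0 : (0:ℝ) ≤ Real.exp (-(η/2)) := Real.exp_nonneg _
  have hr1 : Real.exp (-(η/2)) < 1 := by rw [Real.exp_lt_one_iff]; linarith
  exact (tsum_le_geom (Sterm_nonneg p c η ν hη)
    (by positivity) hr0 hr1 (Sterm_major p c η ν K hp hc hη (by linarith) hK)).1

lemma rpow_add_le (a b r : ℝ) (ha : 0 ≤ a) (hb : 0 ≤ b) (hr : 0 ≤ r) :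
    (a + b) ^ r ≤ (2:ℝ)^r * (a ^ r + b ^ r) := by
  have h1 : a + b ≤ 2 * max a b := by
    rcases max_cases a b with ⟨h, h'⟩ | ⟨h, h'⟩ <;> rw [h] <;> linarith
  have h2 : (a + b) ^ r ≤ (2 * max a b) ^ r :=
    Real.rpow_le_rpow (by positivity) h1 hr
  have h3 : (2 * max a b) ^ r = (2:ℝ)^r * (max a b) ^ r :=
    Real.mul_rpow (by norm_num) (by rcases max_cases a b with ⟨h, _⟩ | ⟨h, _⟩ <;> rw [h] <;> assumption)
  have h4 : (max a b) ^ r ≤ a ^ r + b ^ r := by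
    rcases max_cases a b with ⟨h, _⟩ | ⟨h, _⟩ <;> rw [h]
    · nlinarith [Real.rpow_nonneg hb r]
    · nlinarith [Real.rpow_nonneg ha r]
  calc (a+b)^r ≤ (2 * max a b) ^ r := h2
    _ = (2:ℝ)^r * (max a b) ^ r := h3
    _ ≤ (2:ℝ)^r * (a ^ r + b ^ r) :=
        mul_le_mul_of_nonneg_left h4 (by positivity)

lemma tsum_ge_window (p c η ν lb : ℝ) (hp : 1 ≤ p) (hc : 1 ≤ c) (hη : 0 < η)
    (a N : ℕ) (hlb : ∀ n : ℕ, a ≤ n → n ≤ a + N → lb ≤ Sterm p c η ν n) :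
    ((N:ℝ) + 1) * lb ≤ ∑' n, Sterm p c η ν n := by
  have hsum := Sterm_summable p c η ν hp hc hη
  have h1 : ∑ n ∈ Finset.Icc a (a+N), Sterm p c η ν n ≤ ∑' n, Sterm p c η ν n :=
    Summable.sum_le_tsum _ (fun i _ => Sterm_nonneg p c η ν hη i) hsum
  have h2 : (Finset.Icc a (a+N)).card • lb ≤ ∑ n ∈ Finset.Icc a (a+N), Sterm p c η ν n :=
    Finset.card_nsmul_le_sum _ _ _
      (fun n hn => hlb n (Finset.mem_Icc.1 hn).1 (Finset.mem_Icc.1 hn).2)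
  have hcard : (Finset.Icc a (a+N)).card = N + 1 := by
    rw [Nat.card_Icc]; omega
  rw [hcard, nsmul_eq_mul] at h2
  push_cast at h2
  linarith

lemma lower_pos1 (p c η ν Mv : ℝ) (hp : 1 ≤ p) (hc : 1 ≤ c) (hη : 0 < η)
    (hηM : η ≤ Mv) (hν : 0 ≤ ν) :
    (2:ℝ)^(-(2*p)) * Real.exp (-(p*(1+4*Mv))) * Mv * ν^(c-1) ≤
      ∑' n, Sterm p c η ν n := by
  set a := ⌈ν/η⌉₊ with ha
  set N := ⌈Mv/η⌉₊ with hN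
  have ha1 : ν ≤ η * a := by
    have := Nat.le_ceil (ν/η)
    rw [div_le_iff₀ hη] at this
    linarith [this]
  have ha2 : η * a < ν + η := by
    have h := Nat.ceil_lt_add_one (div_nonneg hν hη.le : (0:ℝ) ≤ ν/η)
    have : η * (a:ℝ) < η * (ν/η + 1) := by
      exact mul_lt_mul_of_pos_left h hη
    rw [mul_add, mul_one, mul_div_cancel₀ _ hη.ne'] at this
    linarith
  have hN1 : Mv/η ≤ (N:ℝ) := Nat.le_ceil _
  have hN2 : η * N < Mv + η := by
    have h := Nat.ceil_lt_add_one (div_nonneg (by linarith) hη.le : (0:ℝ) ≤ Mv/η)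
    have : η * (N:ℝ) < η * (Mv/η + 1) := mul_lt_mul_of_pos_left h hη
    rw [mul_add, mul_one, mul_div_cancel₀ _ hη.ne'] at this
    linarith
  have key : ∀ n : ℕ, a ≤ n → n ≤ a + N →
      (2:ℝ)^(-(2*p)) * Real.exp (-(p*(1+4*Mv))) * ν^(c-1) * η ≤ Sterm p c η ν n := by
    intro n hn1 hn2
    have hq1 : (a:ℝ) ≤ (n:ℝ) := by exact_mod_cast hn1
    have hq2 : (n:ℝ) ≤ (a:ℝ) + (N:ℝ) := by exact_mod_cast hn2
    set x := η*((n:ℝ)+1) - ν with hx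
    have hx0 : 0 ≤ x := by
      have : η * (a:ℝ) ≤ η * (n:ℝ) := mul_le_mul_of_nonneg_left hq1 hη.le
      simp only [hx]; nlinarith
    have hx1 : x ≤ 1 + 4*Mv := by
      have : η * (n:ℝ) ≤ η * ((a:ℝ) + (N:ℝ)) := mul_le_mul_of_nonneg_left hq2 hη.le
      simp only [hx]; nlinarith
    have hGv : -(1+4*Mv) ≤ Gv η x := le_trans (by linarith) (Gv_ge η x hη.le hx0)
    have hexp : Real.exp (-(p*(1+4*Mv))) ≤ Real.exp (p * Gv η x) := by
      apply Real.exp_le_exp.2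
      nlinarith [mul_le_mul_of_nonneg_left hGv (by linarith : (0:ℝ) ≤ p)]
    have ht : ν ^ (c-1) ≤ (η*((n:ℝ)+1)) ^ (c-1) := by
      apply Real.rpow_le_rpow hν _ (by linarith)
      simp only [hx] at hx0; linarith
    refine le_trans ?_ (Sterm_ge_G p c η ν (by linarith) hc hη n)
    have h2p : (0:ℝ) ≤ (2:ℝ)^(-(2*p)) := by positivity
    have hν' : (0:ℝ) ≤ ν^(c-1) := Real.rpow_nonneg hν _
    calc (2:ℝ)^(-(2*p)) * Real.exp (-(p*(1+4*Mv))) * ν^(c-1) * η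
        ≤ (2:ℝ)^(-(2*p)) * Real.exp (p * Gv η x) * ν^(c-1) * η := by
          apply mul_le_mul_of_nonneg_right _ hη.le
          exact mul_le_mul_of_nonneg_right
            (mul_le_mul_of_nonneg_left hexp h2p) hν'
      _ ≤ (2:ℝ)^(-(2*p)) * Real.exp (p * Gv η x) * (η*((n:ℝ)+1))^(c-1) * η := by
          apply mul_le_mul_of_nonneg_right _ hη.le
          exact mul_le_mul_of_nonneg_left ht (by positivity)
  have := tsum_ge_window p c η ν _ hp hc hη a N key
  refine le_trans ?_ this
  have hcount : Mv ≤ ((N:ℝ)+1) * η := by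
    have : Mv ≤ η * N + η := by
      rw [div_le_iff₀ hη] at hN1; linarith
    nlinarith
  have hC : (0:ℝ) ≤ (2:ℝ)^(-(2*p)) * Real.exp (-(p*(1+4*Mv))) * ν^(c-1) := by
    have : (0:ℝ) ≤ ν^(c-1) := Real.rpow_nonneg hν _
    positivity
  calc (2:ℝ)^(-(2*p)) * Real.exp (-(p*(1+4*Mv))) * Mv * ν^(c-1)
      = ((2:ℝ)^(-(2*p)) * Real.exp (-(p*(1+4*Mv))) * ν^(c-1)) * Mv := by ring
    _ ≤ ((2:ℝ)^(-(2*p)) * Real.exp (-(p*(1+4*Mv))) * ν^(c-1)) * (((N:ℝ)+1) * η) :=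
        mul_le_mul_of_nonneg_left hcount hC
    _ = ((N:ℝ)+1) * ((2:ℝ)^(-(2*p)) * Real.exp (-(p*(1+4*Mv))) * ν^(c-1) * η) := by ring

lemma lower_pos2 (p c η ν Mv : ℝ) (hp : 1 ≤ p) (hc : 1 ≤ c) (hη : 0 < η)
    (hηM : η ≤ Mv) (hν : 0 ≤ ν) :
    (2:ℝ)^(-(2*p)) * Real.exp (-(p*(1+4*Mv))) * Mv ≤ ∑' n, Sterm p c η ν n := by
  set a := ⌈(ν+1)/η⌉₊ with ha
  set N := ⌈Mv/η⌉₊ with hN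
  have ha1 : ν + 1 ≤ η * a := by
    have := Nat.le_ceil ((ν+1)/η)
    rw [div_le_iff₀ hη] at this
    linarith [this]
  have ha2 : η * a < ν + 1 + η := by
    have h := Nat.ceil_lt_add_one (div_nonneg (by linarith) hη.le : (0:ℝ) ≤ (ν+1)/η)
    have : η * (a:ℝ) < η * ((ν+1)/η + 1) := mul_lt_mul_of_pos_left h hη
    rw [mul_add, mul_one, mul_div_cancel₀ _ hη.ne'] at this
    linarith
  have hN1 : Mv/η ≤ (N:ℝ) := Nat.le_ceil _
  have hN2 : η * N < Mv + η := by
    have h := Nat.ceil_lt_add_one (div_nonneg (by linarith) hη.le : (0:ℝ) ≤ Mv/η)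
    have : η * (N:ℝ) < η * (Mv/η + 1) := mul_lt_mul_of_pos_left h hη
    rw [mul_add, mul_one, mul_div_cancel₀ _ hη.ne'] at this
    linarith
  have key : ∀ n : ℕ, a ≤ n → n ≤ a + N →
      (2:ℝ)^(-(2*p)) * Real.exp (-(p*(1+4*Mv))) * η ≤ Sterm p c η ν n := by
    intro n hn1 hn2
    have hq1 : (a:ℝ) ≤ (n:ℝ) := by exact_mod_cast hn1
    have hq2 : (n:ℝ) ≤ (a:ℝ) + (N:ℝ) := by exact_mod_cast hn2
    set x := η*((n:ℝ)+1) - ν with hx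
    have hx0 : 1 ≤ x := by
      have : η * (a:ℝ) ≤ η * (n:ℝ) := mul_le_mul_of_nonneg_left hq1 hη.le
      simp only [hx]; nlinarith
    have hx1 : x ≤ 1 + 4*Mv := by
      have : η * (n:ℝ) ≤ η * ((a:ℝ) + (N:ℝ)) := mul_le_mul_of_nonneg_left hq2 hη.le
      simp only [hx]; nlinarith
    have hGv : -(1+4*Mv) ≤ Gv η x := le_trans (by linarith) (Gv_ge η x hη.le (by linarith))
    have hexp : Real.exp (-(p*(1+4*Mv))) ≤ Real.exp (p * Gv η x) := by
      apply Real.exp_le_exp.2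
      nlinarith [mul_le_mul_of_nonneg_left hGv (by linarith : (0:ℝ) ≤ p)]
    have ht : (1:ℝ) ≤ (η*((n:ℝ)+1)) ^ (c-1) := by
      apply Real.one_le_rpow _ (by linarith)
      simp only [hx] at hx0; linarith
    refine le_trans ?_ (Sterm_ge_G p c η ν (by linarith) hc hη n)
    have h2p : (0:ℝ) ≤ (2:ℝ)^(-(2*p)) := by positivity
    calc (2:ℝ)^(-(2*p)) * Real.exp (-(p*(1+4*Mv))) * η
        = (2:ℝ)^(-(2*p)) * Real.exp (-(p*(1+4*Mv))) * 1 * η := by ring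
      _ ≤ (2:ℝ)^(-(2*p)) * Real.exp (p * Gv η x) * (η*((n:ℝ)+1))^(c-1) * η := by
          apply mul_le_mul_of_nonneg_right _ hη.le
          apply mul_le_mul _ ht (by norm_num) (by positivity)
          exact mul_le_mul_of_nonneg_left hexp h2p
  have := tsum_ge_window p c η ν _ hp hc hη a N key
  refine le_trans ?_ this
  have hcount : Mv ≤ ((N:ℝ)+1) * η := by
    have : Mv ≤ η * N + η := by
      rw [div_le_iff₀ hη] at hN1; linarith
    nlinarith
  have hC : (0:ℝ) ≤ (2:ℝ)^(-(2*p)) * Real.exp (-(p*(1+4*Mv))) := by positivity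
  calc (2:ℝ)^(-(2*p)) * Real.exp (-(p*(1+4*Mv))) * Mv
      ≤ ((2:ℝ)^(-(2*p)) * Real.exp (-(p*(1+4*Mv)))) * (((N:ℝ)+1) * η) :=
        mul_le_mul_of_nonneg_left hcount hC
    _ = ((N:ℝ)+1) * ((2:ℝ)^(-(2*p)) * Real.exp (-(p*(1+4*Mv))) * η) := by ring

lemma lower_neg (p c η ν Mv : ℝ) (hp : 1 ≤ p) (hc : 1 ≤ c) (hη : 0 < η)
    (hηM : η ≤ Mv) (hν : ν < 0) :
    (2:ℝ)^(-(2*p)) * Real.exp (-(p*(1+4*Mv))) * Mv * Real.exp (p*ν) ≤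
      ∑' n, Sterm p c η ν n := by
  set a := ⌈1/η⌉₊ with ha
  set N := ⌈Mv/η⌉₊ with hN
  have ha1 : 1 ≤ η * a := by
    have := Nat.le_ceil (1/η)
    rw [div_le_iff₀ hη] at this
    linarith [this]
  have ha2 : η * a < 1 + η := by
    have h := Nat.ceil_lt_add_one (div_nonneg (by norm_num) hη.le : (0:ℝ) ≤ 1/η)
    have : η * (a:ℝ) < η * (1/η + 1) := mul_lt_mul_of_pos_left h hη
    rw [mul_add, mul_one, mul_div_cancel₀ _ hη.ne'] at this
    linarith
  have hN1 : Mv/η ≤ (N:ℝ) := Nat.le_ceil _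
  have hN2 : η * N < Mv + η := by
    have h := Nat.ceil_lt_add_one (div_nonneg (by linarith) hη.le : (0:ℝ) ≤ Mv/η)
    have : η * (N:ℝ) < η * (Mv/η + 1) := mul_lt_mul_of_pos_left h hη
    rw [mul_add, mul_one, mul_div_cancel₀ _ hη.ne'] at this
    linarith
  have key : ∀ n : ℕ, a ≤ n → n ≤ a + N →
      (2:ℝ)^(-(2*p)) * (Real.exp (-(p*(1+4*Mv))) * Real.exp (p*ν)) * η ≤
        Sterm p c η ν n := by
    intro n hn1 hn2
    have hq1 : (a:ℝ) ≤ (n:ℝ) := by exact_mod_cast hn1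
    have hq2 : (n:ℝ) ≤ (a:ℝ) + (N:ℝ) := by exact_mod_cast hn2
    set t := η*((n:ℝ)+1) with htdef
    have htl : 1 ≤ t := by
      have : η * (a:ℝ) ≤ η * (n:ℝ) := mul_le_mul_of_nonneg_left hq1 hη.le
      simp only [htdef]; nlinarith
    have htu : t ≤ 1 + 3*η + Mv := by
      have : η * (n:ℝ) ≤ η * ((a:ℝ) + (N:ℝ)) := mul_le_mul_of_nonneg_left hq2 hη.le
      simp only [htdef]; nlinarith
    have hxη : η ≤ t - ν := by nlinarith
    have hGv : Gv η (t - ν) = η - (t - ν) := Gv_eq η (t-ν) hη.le hxη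
    have hexp : Real.exp (-(p*(1+4*Mv))) * Real.exp (p*ν) ≤
        Real.exp (p * Gv η (t - ν)) := by
      rw [hGv, ← Real.exp_add]
      apply Real.exp_le_exp.2
      have h1 : η - t ≥ -(1+4*Mv) := by nlinarith
      nlinarith [mul_le_mul_of_nonneg_left h1 (by linarith : (0:ℝ) ≤ p)]
    have ht1 : (1:ℝ) ≤ t ^ (c-1) := Real.one_le_rpow htl (by linarith)
    refine le_trans ?_ (Sterm_ge_G p c η ν (by linarith) hc hη n)
    have h2p : (0:ℝ) ≤ (2:ℝ)^(-(2*p)) := by positivity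
    calc (2:ℝ)^(-(2*p)) * (Real.exp (-(p*(1+4*Mv))) * Real.exp (p*ν)) * η
        = (2:ℝ)^(-(2*p)) * (Real.exp (-(p*(1+4*Mv))) * Real.exp (p*ν)) * 1 * η := by
          ring
      _ ≤ (2:ℝ)^(-(2*p)) * Real.exp (p * Gv η (t - ν)) * t^(c-1) * η := by
          apply mul_le_mul_of_nonneg_right _ hη.le
          apply mul_le_mul _ ht1 (by norm_num) (by positivity)
          exact mul_le_mul_of_nonneg_left hexp h2p
  have := tsum_ge_window p c η ν _ hp hc hη a N key
  refine le_trans ?_ this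
  have hcount : Mv ≤ ((N:ℝ)+1) * η := by
    have : Mv ≤ η * N + η := by
      rw [div_le_iff₀ hη] at hN1; linarith
    nlinarith
  have hC : (0:ℝ) ≤ (2:ℝ)^(-(2*p)) * (Real.exp (-(p*(1+4*Mv))) * Real.exp (p*ν)) := by
    positivity
  calc (2:ℝ)^(-(2*p)) * Real.exp (-(p*(1+4*Mv))) * Mv * Real.exp (p*ν)
      = ((2:ℝ)^(-(2*p)) * (Real.exp (-(p*(1+4*Mv))) * Real.exp (p*ν))) * Mv := by ring
    _ ≤ ((2:ℝ)^(-(2*p)) * (Real.exp (-(p*(1+4*Mv))) * Real.exp (p*ν))) * (((N:ℝ)+1) * η) :=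
        mul_le_mul_of_nonneg_left hcount hC
    _ = ((N:ℝ)+1) * ((2:ℝ)^(-(2*p)) * (Real.exp (-(p*(1+4*Mv))) * Real.exp (p*ν)) * η) := by
        ring

lemma upper_neg (p c η ν Mv K : ℝ) (hp : 1 ≤ p) (hc : 1 ≤ c) (hη : 0 < η)
    (hηM : η ≤ Mv) (hK1 : 1 ≤ K)
    (hK : ∀ t : ℝ, 0 ≤ t → t ^ (c-1) ≤ K * Real.exp (t/2)) :
    ∑' n, Sterm p c η ν n ≤
      (Real.exp (p*Mv) * K * (2 * Real.exp (Mv/2))) * Real.exp (p*ν) := by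
  have hr0 : (0:ℝ) ≤ Real.exp (-(η/2)) := Real.exp_nonneg _
  have hr1 : Real.exp (-(η/2)) < 1 := by rw [Real.exp_lt_one_iff]; linarith
  have hterm : ∀ n : ℕ, Sterm p c η ν n ≤
      (Real.exp (p*Mv) * K * Real.exp (p*ν) * η) * (Real.exp (-(η/2)))^(n+1) := by
    intro n
    refine (Sterm_le_C p c η ν hp hc hη n).trans ?_
    set s := η*((n:ℝ)+1) with hs
    have hs0 : 0 ≤ s := by positivity
    have h2 : p * (η - (s - ν)) ≤ p*Mv - s + p*ν := by nlinarith
    have hrn : (Real.exp (-(η/2))) ^ (n+1) = Real.exp (-s/2) := by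
      rw [← Real.exp_nat_mul]
      congr 1
      simp only [hs]
      push_cast
      ring
    have key : Real.exp (p*Mv - s + p*ν) * Real.exp (s/2) =
        Real.exp (p*Mv) * Real.exp (p*ν) * Real.exp (-s/2) := by
      rw [← Real.exp_add, ← Real.exp_add, ← Real.exp_add]
      congr 1; ring
    calc Real.exp (p * (η - (s - ν))) * s^(c-1) * η
        ≤ Real.exp (p*Mv - s + p*ν) * (K * Real.exp (s/2)) * η := by
          apply mul_le_mul_of_nonneg_right _ hη.le
          exact mul_le_mul (Real.exp_le_exp.2 h2) (hK s hs0)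
            (Real.rpow_nonneg hs0 _) (Real.exp_nonneg _)
      _ = K * η * (Real.exp (p*Mv - s + p*ν) * Real.exp (s/2)) := by ring
      _ = K * η * (Real.exp (p*Mv) * Real.exp (p*ν) * Real.exp (-s/2)) := by rw [key]
      _ = (Real.exp (p*Mv) * K * Real.exp (p*ν) * η) * (Real.exp (-(η/2)))^(n+1) := by
          rw [hrn]; ring
  obtain ⟨-, hle⟩ := tsum_le_geom (Sterm_nonneg p c η ν hη)
    (by positivity) hr0 hr1 hterm
  refine hle.trans ?_
  have hg := geom_eta η Mv hη hηM
  have hge0 : (0:ℝ) ≤ Real.exp (p*Mv) * K * Real.exp (p*ν) := by positivity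
  calc Real.exp (p*Mv) * K * Real.exp (p*ν) * η * ∑' k:ℕ, (Real.exp (-(η/2)))^k
      = (Real.exp (p*Mv) * K * Real.exp (p*ν)) * (η * ∑' k:ℕ, (Real.exp (-(η/2)))^k) := by
        ring
    _ ≤ (Real.exp (p*Mv) * K * Real.exp (p*ν)) * (2 * Real.exp (Mv/2)) :=
        mul_le_mul_of_nonneg_left hg hge0
    _ = (Real.exp (p*Mv) * K * (2 * Real.exp (Mv/2))) * Real.exp (p*ν) := by ring

lemma partA (p c η ν Mv : ℝ) (hp : 1 ≤ p) (hc : 1 ≤ c) (hη : 0 < η)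
    (hηM : η ≤ Mv) (hν : 0 ≤ ν) :
    ∑ n ∈ Finset.range ⌈ν/η⌉₊, Sterm p c η ν n ≤
      Real.exp (2*Mv) * (ν + Mv)^(c-1) := by
  set n₀ := ⌈ν/η⌉₊ with hn₀
  have hceil : η * n₀ < ν + η := by
    have h := Nat.ceil_lt_add_one (div_nonneg hν hη.le : (0:ℝ) ≤ ν/η)
    have : η * (n₀:ℝ) < η * (ν/η + 1) := mul_lt_mul_of_pos_left h hη
    rw [mul_add, mul_one, mul_div_cancel₀ _ hη.ne'] at this
    linarith
  have step1 : ∑ n ∈ Finset.range n₀, Sterm p c η ν n ≤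
      ∑ n ∈ Finset.range n₀, Real.exp (η*((n:ℝ)+1) - ν) * ((ν+Mv)^(c-1) * η) := by
    apply Finset.sum_le_sum
    intro n hn
    have hn' : (n:ℝ) + 1 ≤ (n₀:ℝ) := by
      have : n + 1 ≤ n₀ := Finset.mem_range.1 hn
      exact_mod_cast this
    have ht : η*((n:ℝ)+1) ≤ ν + Mv := by
      have : η * ((n:ℝ)+1) ≤ η * (n₀:ℝ) := mul_le_mul_of_nonneg_left hn' hη.le
      linarith
    have htpow : (η*((n:ℝ)+1))^(c-1) ≤ (ν+Mv)^(c-1) :=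
      Real.rpow_le_rpow (by positivity) ht (by linarith)
    refine (Sterm_le_A p c η ν hp hc hη n).trans ?_
    calc Real.exp (η*((n:ℝ)+1) - ν) * (η*((n:ℝ)+1))^(c-1) * η
        ≤ Real.exp (η*((n:ℝ)+1) - ν) * (ν+Mv)^(c-1) * η := by
          apply mul_le_mul_of_nonneg_right _ hη.le
          exact mul_le_mul_of_nonneg_left htpow (Real.exp_nonneg _)
      _ = Real.exp (η*((n:ℝ)+1) - ν) * ((ν+Mv)^(c-1) * η) := by ring
  rw [← Finset.sum_mul] at step1
  refine step1.trans ?_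
  -- geometric estimate
  set Sfin := ∑ n ∈ Finset.range n₀, Real.exp (η*((n:ℝ)+1) - ν) with hSfin
  have hSfin_eq : Sfin = Real.exp (η - ν) * ∑ n ∈ Finset.range n₀, (Real.exp η)^n := by
    rw [hSfin, Finset.mul_sum]
    apply Finset.sum_congr rfl
    intro n _
    rw [← Real.exp_nat_mul, ← Real.exp_add]
    congr 1; ring
  have hr1 : (1:ℝ) < Real.exp η := by
    rw [← Real.exp_zero]; exact Real.exp_lt_exp.2 hη
  have hgm : (∑ n ∈ Finset.range n₀, (Real.exp η)^n) * (Real.exp η - 1) =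
      (Real.exp η)^n₀ - 1 := geom_sum_mul (Real.exp η) n₀
  have hfinpos : (0:ℝ) ≤ Sfin := by
    rw [hSfin]; exact Finset.sum_nonneg fun n _ => (Real.exp_nonneg _)
  have hpow : (Real.exp η)^n₀ ≤ Real.exp (ν + η) := by
    rw [← Real.exp_nat_mul]
    exact Real.exp_le_exp.2 (by linarith)
  have hkey : Sfin * (Real.exp η - 1) ≤ Real.exp (2*η) := by
    rw [hSfin_eq, mul_assoc, hgm]
    have h1 : (Real.exp η)^n₀ - 1 ≤ Real.exp (ν+η) := by
      linarith
    calc Real.exp (η-ν) * ((Real.exp η)^n₀ - 1) ≤ Real.exp (η-ν) * Real.exp (ν+η) := by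
          apply mul_le_mul_of_nonneg_left h1 (Real.exp_nonneg _)
      _ = Real.exp (2*η) := by rw [← Real.exp_add]; congr 1; ring
  have hηe : η ≤ Real.exp η - 1 := by linarith [Real.add_one_le_exp η]
  have hSη : Sfin * η ≤ Real.exp (2*Mv) := by
    calc Sfin * η ≤ Sfin * (Real.exp η - 1) := mul_le_mul_of_nonneg_left hηe hfinpos
      _ ≤ Real.exp (2*η) := hkey
      _ ≤ Real.exp (2*Mv) := Real.exp_le_exp.2 (by linarith)
  have hpos : (0:ℝ) ≤ (ν+Mv)^(c-1) := Real.rpow_nonneg (by linarith) _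
  calc Sfin * ((ν+Mv)^(c-1) * η) = (Sfin * η) * (ν+Mv)^(c-1) := by ring
    _ ≤ Real.exp (2*Mv) * (ν+Mv)^(c-1) := mul_le_mul_of_nonneg_right hSη hpos

lemma partB (p c η ν Mv K : ℝ) (hp : 1 ≤ p) (hc : 1 ≤ c) (hη : 0 < η)
    (hηM : η ≤ Mv) (hν : 0 ≤ ν) (hK1 : 1 ≤ K)
    (hK : ∀ t : ℝ, 0 ≤ t → t ^ (c-1) ≤ K * Real.exp (t/2)) :
    ∑' m, Sterm p c η ν (m + ⌈ν/η⌉₊) ≤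
      (2:ℝ)^(c-1) * Real.exp Mv * (K * Real.exp (Mv/2) + ν^(c-1)) * (2 * Real.exp (Mv/2)) := by
  set n₀ := ⌈ν/η⌉₊ with hn₀
  have hceil1 : ν ≤ η * n₀ := by
    have := Nat.le_ceil (ν/η)
    rw [div_le_iff₀ hη] at this
    linarith [this]
  have hceil2 : η * n₀ < ν + η := by
    have h := Nat.ceil_lt_add_one (div_nonneg hν hη.le : (0:ℝ) ≤ ν/η)
    have : η * (n₀:ℝ) < η * (ν/η + 1) := mul_lt_mul_of_pos_left h hη
    rw [mul_add, mul_one, mul_div_cancel₀ _ hη.ne'] at this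
    linarith
  have hr0 : (0:ℝ) ≤ Real.exp (-(η/2)) := Real.exp_nonneg _
  have hr1 : Real.exp (-(η/2)) < 1 := by rw [Real.exp_lt_one_iff]; linarith
  have hν' : (0:ℝ) ≤ ν^(c-1) := Real.rpow_nonneg hν _
  set C := (2:ℝ)^(c-1) * Real.exp Mv * (K * Real.exp (Mv/2) + ν^(c-1)) * η with hC
  have hCpos : (0:ℝ) ≤ C := by positivity
  have hterm : ∀ m : ℕ, Sterm p c η ν (m + n₀) ≤ C * (Real.exp (-(η/2)))^(m+1) := by
    intro m
    refine (Sterm_le_B p c η ν hp hc hη (m + n₀)).trans ?_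
    have hcast : η * (((m + n₀ : ℕ):ℝ) + 1) = η*((m:ℝ)+1) + η*(n₀:ℝ) := by
      push_cast; ring
    rw [hcast]
    set s := η*((m:ℝ)+1) with hs
    have hs0 : 0 ≤ s := by positivity
    set t := s + η*(n₀:ℝ) with ht
    have ht0 : 0 ≤ t := by
      have : (0:ℝ) ≤ η*(n₀:ℝ) := by positivity
      linarith
    have hrn : (Real.exp (-(η/2))) ^ (m+1) = Real.exp (-s/2) := by
      rw [← Real.exp_nat_mul]
      congr 1
      simp only [hs]
      push_cast
      ring
    -- exponential factor
    have hexp : Real.exp (η - (t - ν)) ≤ Real.exp Mv * Real.exp (-s) := by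
      rw [← Real.exp_add]
      apply Real.exp_le_exp.2
      simp only [ht]
      linarith
    -- power factor
    have hpow : t^(c-1) ≤ (2:ℝ)^(c-1) * (K * Real.exp (Mv/2) * Real.exp (s/2) + ν^(c-1)) := by
      have h1 : t ≤ (s + Mv) + ν := by simp only [ht]; linarith
      have h2 : t^(c-1) ≤ ((s+Mv)+ν)^(c-1) :=
        Real.rpow_le_rpow ht0 h1 (by linarith)
      have h3 : ((s+Mv)+ν)^(c-1) ≤ (2:ℝ)^(c-1) * ((s+Mv)^(c-1) + ν^(c-1)) :=
        rpow_add_le (s+Mv) ν (c-1) (by linarith) hν (by linarith)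
      have h4 : (s+Mv)^(c-1) ≤ K * Real.exp (Mv/2) * Real.exp (s/2) := by
        have := hK (s+Mv) (by linarith)
        calc (s+Mv)^(c-1) ≤ K * Real.exp ((s+Mv)/2) := this
          _ = K * Real.exp (Mv/2) * Real.exp (s/2) := by
              rw [mul_assoc, ← Real.exp_add]; congr 2; ring
      have h5 : (0:ℝ) ≤ (2:ℝ)^(c-1) := by positivity
      calc t^(c-1) ≤ ((s+Mv)+ν)^(c-1) := h2
        _ ≤ (2:ℝ)^(c-1) * ((s+Mv)^(c-1) + ν^(c-1)) := h3
        _ ≤ (2:ℝ)^(c-1) * (K * Real.exp (Mv/2) * Real.exp (s/2) + ν^(c-1)) := by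
            apply mul_le_mul_of_nonneg_left _ h5
            linarith
    have ht_nonneg : (0:ℝ) ≤ t^(c-1) := Real.rpow_nonneg ht0 _
    have e1 : Real.exp Mv * Real.exp (-s) * Real.exp (s/2) =
        Real.exp Mv * Real.exp (-s/2) := by
      rw [mul_assoc, ← Real.exp_add]
      congr 2; ring
    have e2 : Real.exp (-s) ≤ Real.exp (-s/2) := Real.exp_le_exp.2 (by linarith)
    calc Real.exp (η - (t - ν)) * t^(c-1) * η
        ≤ (Real.exp Mv * Real.exp (-s)) * ((2:ℝ)^(c-1) *
            (K * Real.exp (Mv/2) * Real.exp (s/2) + ν^(c-1))) * η := by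
          apply mul_le_mul_of_nonneg_right _ hη.le
          exact mul_le_mul hexp hpow ht_nonneg (by positivity)
      _ = (2:ℝ)^(c-1) * η * (K * Real.exp (Mv/2) *
            (Real.exp Mv * Real.exp (-s) * Real.exp (s/2))) +
          (2:ℝ)^(c-1) * η * (ν^(c-1) * (Real.exp Mv * Real.exp (-s))) := by ring
      _ ≤ (2:ℝ)^(c-1) * η * (K * Real.exp (Mv/2) * (Real.exp Mv * Real.exp (-s/2))) +
          (2:ℝ)^(c-1) * η * (ν^(c-1) * (Real.exp Mv * Real.exp (-s/2))) := by
          apply add_le_add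
          · rw [e1]
          · apply mul_le_mul_of_nonneg_left _ (by positivity)
            apply mul_le_mul_of_nonneg_left _ hν'
            exact mul_le_mul_of_nonneg_left e2 (Real.exp_nonneg _)
      _ = C * (Real.exp (-(η/2)))^(m+1) := by
          rw [hrn, hC]; ring
  obtain ⟨-, hle⟩ := tsum_le_geom (fun m => Sterm_nonneg p c η ν hη (m + n₀))
    hCpos hr0 hr1 hterm
  refine hle.trans ?_
  have hg := geom_eta η Mv hη hηM
  have hpre : (0:ℝ) ≤ (2:ℝ)^(c-1) * Real.exp Mv * (K * Real.exp (Mv/2) + ν^(c-1)) := by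
    positivity
  calc C * ∑' k:ℕ, (Real.exp (-(η/2)))^k
      = ((2:ℝ)^(c-1) * Real.exp Mv * (K * Real.exp (Mv/2) + ν^(c-1))) *
          (η * ∑' k:ℕ, (Real.exp (-(η/2)))^k) := by rw [hC]; ring
    _ ≤ ((2:ℝ)^(c-1) * Real.exp Mv * (K * Real.exp (Mv/2) + ν^(c-1))) *
          (2 * Real.exp (Mv/2)) := mul_le_mul_of_nonneg_left hg hpre

/-- The series `S_{p,c}(η,ν) = Σ_{n≥1} e^{p(ηn−ν)} /
((1 + e^{ηn−ν})^p (1 + e^{η(n−1)−ν})^p) · (ηn)^{c−1} η`,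
where the summation index `n ≥ 1` is written as `n + 1` for `n : ℕ`. -/
noncomputable def Spc (p c η ν : ℝ) : ℝ :=
  ∑' n : ℕ,
    Real.exp (p * (η * ((n : ℝ) + 1) - ν)) /
      ((1 + Real.exp (η * ((n : ℝ) + 1) - ν)) ^ p *
        (1 + Real.exp (η * (n : ℝ) - ν)) ^ p) *
    (η * ((n : ℝ) + 1)) ^ (c - 1) * η

lemma Spc_eq (p c η ν : ℝ) : Spc p c η ν = ∑' n, Sterm p c η ν n := rfl

set_option maxHeartbeats 2000000 in
theorem stmt_6 (p c M : ℝ) (hp : 1 ≤ p) (hc : 1 ≤ c) (hM : 0 < M) :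
    ∃ c₀ C₀ : ℝ, 0 < c₀ ∧ c₀ ≤ C₀ ∧
      ∀ η ν : ℝ, 0 < η → η ≤ M →
        (0 ≤ ν →
          c₀ * (1 + ν ^ (c - 1) + η ^ (c - 1)) ≤ Spc p c η ν ∧
            Spc p c η ν ≤ C₀ * (1 + ν ^ (c - 1) + η ^ (c - 1))) ∧
        (ν < 0 →
          c₀ * Real.exp (p * ν) ≤ Spc p c η ν ∧
            Spc p c η ν ≤ C₀ * Real.exp (p * ν)) := by
  obtain ⟨K, hK1, hK⟩ := poly_le c hc
  set EM := max 1 (M^(c-1)) with hEM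
  have hEM1 : (1:ℝ) ≤ EM := le_max_left _ _
  set clow := (2:ℝ)^(-(2*p)) * Real.exp (-(p*(1+4*M))) * M with hclow
  have hclowpos : 0 < clow := by rw [hclow]; positivity
  have hMc : (0:ℝ) ≤ M^(c-1) := Real.rpow_nonneg hM.le _
  set CU := Real.exp (2*M) * (2:ℝ)^(c-1) * (1 + M^(c-1)) +
      (2:ℝ)^(c-1) * Real.exp M * (K * Real.exp (M/2) + 1) * (2 * Real.exp (M/2)) with hCU
  have hCUpos : 0 < CU := by rw [hCU]; positivity
  set Cneg := Real.exp (p*M) * K * (2 * Real.exp (M/2)) with hCneg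
  have hCnegpos : 0 < Cneg := by rw [hCneg]; positivity
  set C₀ := max CU Cneg with hC₀
  have hC₀pos : 0 < C₀ := lt_of_lt_of_le hCUpos (le_max_left _ _)
  set c₀ := min (clow/(2*(1+EM))) (min clow C₀) with hc₀
  have hc₀pos : 0 < c₀ := by
    apply lt_min
    · positivity
    · exact lt_min hclowpos hC₀pos
  refine ⟨c₀, C₀, hc₀pos, ?_, ?_⟩
  · exact le_trans (min_le_right _ _) (le_trans (min_le_right _ _) le_rfl)
  intro η ν hη hηM
  have hsum := Sterm_summable p c η ν hp hc hη
  rw [Spc_eq]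
  constructor
  · -- ν ≥ 0 case
    intro hν
    have hν' : (0:ℝ) ≤ ν^(c-1) := Real.rpow_nonneg hν _
    have hηpow : η^(c-1) ≤ EM := by
      rcases le_total η 1 with h | h
      · exact le_trans (Real.rpow_le_one hη.le h (by linarith)) (le_max_left _ _)
      · exact le_trans (Real.rpow_le_rpow (by linarith) hηM (by linarith))
          (le_max_right _ _)
    have hηp' : (0:ℝ) ≤ η^(c-1) := Real.rpow_nonneg hη.le _
    constructor
    · -- lower bound
      have h1 := lower_pos1 p c η ν M hp hc hη hηM hν
      have h2 := lower_pos2 p c η ν M hp hc hη hηM hν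
      rw [← hclow] at h1 h2
      have hsplit : 1 + ν^(c-1) + η^(c-1) ≤ (1+EM)*(1+ν^(c-1)) := by nlinarith
      have hcle : c₀ ≤ clow/(2*(1+EM)) := min_le_left _ _
      have step : c₀ * (1 + ν^(c-1) + η^(c-1)) ≤ (clow/2) * (1+ν^(c-1)) := by
        calc c₀ * (1 + ν^(c-1) + η^(c-1)) ≤ c₀ * ((1+EM)*(1+ν^(c-1))) :=
              mul_le_mul_of_nonneg_left hsplit hc₀pos.le
          _ = (c₀ * (1+EM)) * (1+ν^(c-1)) := by ring
          _ ≤ (clow/(2*(1+EM)) * (1+EM)) * (1+ν^(c-1)) := by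
              apply mul_le_mul_of_nonneg_right _ (by linarith)
              exact mul_le_mul_of_nonneg_right hcle (by linarith)
          _ = (clow/2) * (1+ν^(c-1)) := by
              field_simp
      refine step.trans ?_
      nlinarith [h1, h2]
    · -- upper bound
      set n₀ := ⌈ν/η⌉₊ with hn₀
      have hdecomp := Summable.sum_add_tsum_nat_add n₀ hsum
      have hA := partA p c η ν M hp hc hη hηM hν
      have hB := partB p c η ν M K hp hc hη hηM hν hK1 hK
      rw [← hn₀] at hA hB
      have hub : ∑' n, Sterm p c η ν n ≤
          Real.exp (2*M) * (ν+M)^(c-1) +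
          (2:ℝ)^(c-1) * Real.exp M * (K * Real.exp (M/2) + ν^(c-1)) *
            (2 * Real.exp (M/2)) := by
        rw [← hdecomp]
        exact add_le_add hA hB
      have hsplit2 : (ν+M)^(c-1) ≤ (2:ℝ)^(c-1) * (ν^(c-1) + M^(c-1)) :=
        rpow_add_le ν M (c-1) hν hM.le (by linarith)
      have hfinal : ∑' n, Sterm p c η ν n ≤ CU * (1 + ν^(c-1)) := by
        have hk1 : (0:ℝ) ≤ K * Real.exp (M/2) := by positivity
        have e2M : (0:ℝ) < Real.exp (2*M) := Real.exp_pos _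
        have h2c : (0:ℝ) ≤ (2:ℝ)^(c-1) := by positivity
        refine hub.trans ?_
        have step1 : Real.exp (2*M) * (ν+M)^(c-1) ≤
            (Real.exp (2*M) * (2:ℝ)^(c-1)) * (ν^(c-1) + M^(c-1)) := by
          calc Real.exp (2*M) * (ν+M)^(c-1)
              ≤ Real.exp (2*M) * ((2:ℝ)^(c-1) * (ν^(c-1) + M^(c-1))) :=
                mul_le_mul_of_nonneg_left hsplit2 e2M.le
            _ = (Real.exp (2*M) * (2:ℝ)^(c-1)) * (ν^(c-1) + M^(c-1)) := by ring
        have step2 : (Real.exp (2*M) * (2:ℝ)^(c-1)) * (ν^(c-1) + M^(c-1)) ≤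
            (Real.exp (2*M) * (2:ℝ)^(c-1) * (1 + M^(c-1))) * (1 + ν^(c-1)) := by
          have h : ν^(c-1) + M^(c-1) ≤ (1 + M^(c-1)) * (1 + ν^(c-1)) := by
            nlinarith [mul_nonneg hMc hν']
          calc (Real.exp (2*M) * (2:ℝ)^(c-1)) * (ν^(c-1) + M^(c-1))
              ≤ (Real.exp (2*M) * (2:ℝ)^(c-1)) * ((1 + M^(c-1)) * (1 + ν^(c-1))) :=
                mul_le_mul_of_nonneg_left h (by positivity)
            _ = (Real.exp (2*M) * (2:ℝ)^(c-1) * (1 + M^(c-1))) * (1 + ν^(c-1)) := by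
                ring
        have step3 : (2:ℝ)^(c-1) * Real.exp M * (K * Real.exp (M/2) + ν^(c-1)) *
              (2 * Real.exp (M/2)) ≤
            ((2:ℝ)^(c-1) * Real.exp M * (K * Real.exp (M/2) + 1) *
              (2 * Real.exp (M/2))) * (1 + ν^(c-1)) := by
          have h : K * Real.exp (M/2) + ν^(c-1) ≤
              (K * Real.exp (M/2) + 1) * (1 + ν^(c-1)) := by
            nlinarith [mul_nonneg hk1 hν']
          calc (2:ℝ)^(c-1) * Real.exp M * (K * Real.exp (M/2) + ν^(c-1)) *
                (2 * Real.exp (M/2))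
              = ((2:ℝ)^(c-1) * Real.exp M * (2 * Real.exp (M/2))) *
                  (K * Real.exp (M/2) + ν^(c-1)) := by ring
            _ ≤ ((2:ℝ)^(c-1) * Real.exp M * (2 * Real.exp (M/2))) *
                  ((K * Real.exp (M/2) + 1) * (1 + ν^(c-1))) :=
                mul_le_mul_of_nonneg_left h (by positivity)
            _ = ((2:ℝ)^(c-1) * Real.exp M * (K * Real.exp (M/2) + 1) *
                  (2 * Real.exp (M/2))) * (1 + ν^(c-1)) := by ring
        calc Real.exp (2*M) * (ν+M)^(c-1) +
              (2:ℝ)^(c-1) * Real.exp M * (K * Real.exp (M/2) + ν^(c-1)) *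
                (2 * Real.exp (M/2))
            ≤ (Real.exp (2*M) * (2:ℝ)^(c-1) * (1 + M^(c-1))) * (1 + ν^(c-1)) +
              ((2:ℝ)^(c-1) * Real.exp M * (K * Real.exp (M/2) + 1) *
                (2 * Real.exp (M/2))) * (1 + ν^(c-1)) :=
              add_le_add (step1.trans step2) step3
          _ = CU * (1 + ν^(c-1)) := by rw [hCU]; ring
      refine hfinal.trans ?_
      have hCU_le : CU ≤ C₀ := le_max_left _ _
      calc CU * (1 + ν^(c-1)) ≤ C₀ * (1 + ν^(c-1)) :=
            mul_le_mul_of_nonneg_right hCU_le (by linarith)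
        _ ≤ C₀ * (1 + ν^(c-1) + η^(c-1)) := by
            apply mul_le_mul_of_nonneg_left _ hC₀pos.le
            linarith
  · -- ν < 0 case
    intro hν
    constructor
    · have h := lower_neg p c η ν M hp hc hη hηM hν
      rw [← hclow] at h
      refine le_trans ?_ h
      have : c₀ ≤ clow := le_trans (min_le_right _ _) (min_le_left _ _)
      exact mul_le_mul_of_nonneg_right this (Real.exp_nonneg _)
    · have h := upper_neg p c η ν M K hp hc hη hηM hK1 hK
      rw [← hCneg] at h
      refine h.trans ?_
      have : Cneg ≤ C₀ := le_max_right _ _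
      exact mul_le_mul_of_nonneg_right this (Real.exp_nonneg _)
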